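/- In the graph G of the resolving-set construction, every minimal resolving set S of G intersects each of the pairs {u_i,u'_i} (i ∈ [log n + 1]) and each of the pairs {w_j,w'_j} (j ∈ [log m + 1]) in exactly one vertex. -/

import Mathlib

namespace ResConstr

/-! ## The resolving-set construction

Given a Sperner hypergraph `ℋ` with vertex set `{v_1, …, v_n}` (encoded as `Fin n`) and
edge set `E_1, …, E_m` (encoded as `E : Fin m → Set (Fin n)`), where `n = 2^p > 2` and
`m = 2^q > 2`, we build the graph `G` of the reduction from Trans-Enum to MinResolving.
Vertex `v_i` of the paper is `Vert.v ⟨i-1⟩`, edge vertex `e_j` is `Vert.e ⟨j-1⟩`, etc.;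
`U = {u_1, u'_1, …, u_{log n + 1}, u'_{log n + 1}}` is encoded by `Vert.u, Vert.u'` over
`Fin (p+1)` and `W` similarly by `Vert.w, Vert.w'` over `Fin (q+1)`. -/

inductive Vert (n m p q : ℕ) : Type
  | v : Fin n → Vert n m p q
  | e : Fin m → Vert n m p q
  | e' : Fin m → Vert n m p q
  | u : Fin (p + 1) → Vert n m p q
  | u' : Fin (p + 1) → Vert n m p q
  | w : Fin (q + 1) → Vert n m p q
  | w' : Fin (q + 1) → Vert n m p q

variable {n m p q : ℕ}

/-- The base (one-sided) adjacency relation of the construction; the graph is obtained by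
symmetrizing it.  `Nat.testBit (i+1) k = true` encodes `k+1 ∈ I(i+1)`, i.e. the `(k+1)`-th
bit (starting from 1) of the binary representation of the paper-index `i+1` equals 1. -/
def baseRel (E : Fin m → Set (Fin n)) : Vert n m p q → Vert n m p q → Prop
  | .v _, .v _ => True                                       -- V is a clique
  | .e _, .e _ => True                                       -- H is a clique
  | .e' _, .e' _ => True                                     -- H' is a clique
  | .v i, .e j => i ∉ E j                                    -- non-incidence between V and H
  | .v _, .e' _ => True                                      -- V is complete to H'
  | .v i, .u k => Nat.testBit (i.val + 1) k.val = true       -- binary coding between V and U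
  | .v i, .u' k => Nat.testBit (i.val + 1) k.val = true
  | .v _, .w _ => True                                       -- W is complete to V
  | .v _, .w' _ => True
  | .e j, .w k => Nat.testBit (j.val + 1) k.val = true       -- binary coding between H ∪ H' and W
  | .e j, .w' k => Nat.testBit (j.val + 1) k.val = true
  | .e' j, .w k => Nat.testBit (j.val + 1) k.val = true
  | .e' j, .w' k => Nat.testBit (j.val + 1) k.val = true
  | .u _, .u _ => True                                       -- U is a clique minus the edges u_i u'_i
  | .u k, .u' k' => k ≠ k'
  | .u' _, .u' _ => True
  | .u _, .e _ => True                                       -- U is complete to H ∪ H'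
  | .u _, .e' _ => True
  | .u' _, .e _ => True
  | .u' _, .e' _ => True
  | .w k, .w' k' => k = k'                                   -- the only edges inside W are w_j w'_j
  | _, _ => False

/-- The graph `G` of the resolving-set construction. -/
def G (E : Fin m → Set (Fin n)) : SimpleGraph (Vert n m p q) :=
  SimpleGraph.fromRel (baseRel E)

/-- `S` is a resolving set of `G`. -/
def IsResolvingSet {α : Type*} (G : SimpleGraph α) (S : Set α) : Prop :=
  ∀ a b : α, a ≠ b → ∃ z ∈ S, G.dist a z ≠ G.dist b z

/-- `S` is an inclusion-wise minimal resolving set of `G`. -/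
def IsMinimalResolvingSet {α : Type*} (G : SimpleGraph α) (S : Set α) : Prop :=
  IsResolvingSet G S ∧ ∀ S' : Set α, S' ⊂ S → ¬ IsResolvingSet G S'

/-- `T` is a transversal of the hypergraph with edges `E j`. -/
def IsTransversal (E : Fin m → Set (Fin n)) (T : Set (Fin n)) : Prop :=
  ∀ j : Fin m, (T ∩ E j).Nonempty

/-- `T` is an inclusion-wise minimal transversal of the hypergraph with edges `E j`. -/
def IsMinimalTransversal (E : Fin m → Set (Fin n)) (T : Set (Fin n)) : Prop :=
  IsTransversal E T ∧ ∀ T' : Set (Fin n), T' ⊂ T → ¬ IsTransversal E T'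

/-- The family `𝒵` of all sets `Z = X ∪ Y` where `X` picks exactly one vertex from each pair
`{u_k, u'_k}` and `Y` picks exactly one vertex from each pair `{w_k, w'_k}`. -/
def ZFam : Set (Set (Vert n m p q)) :=
  {Z | ∃ (x : Fin (p + 1) → Bool) (y : Fin (q + 1) → Bool),
    Z = (Set.range fun k => if x k then (Vert.u k : Vert n m p q) else Vert.u' k) ∪
        (Set.range fun k => if y k then (Vert.w k : Vert n m p q) else Vert.w' k)}


/-! ### Auxiliary lemmas -/

section Aux

open SimpleGraph

variable {E : Fin m → Set (Fin n)} {S : Set (Vert n m p q)}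

/-! #### Adjacency lemmas -/

lemma adj_iff {a b : Vert n m p q} :
    (G E : SimpleGraph (Vert n m p q)).Adj a b ↔ a ≠ b ∧ (baseRel E a b ∨ baseRel E b a) :=
  SimpleGraph.fromRel_adj _ _ _

lemma a_ve' (i : Fin n) (j : Fin m) : (G E : SimpleGraph (Vert n m p q)).Adj (.v i) (.e' j) := by
  simp [adj_iff, baseRel]

lemma a_vw (i : Fin n) (l : Fin (q + 1)) : (G E : SimpleGraph (Vert n m p q)).Adj (.v i) (.w l) := by
  simp [adj_iff, baseRel]

lemma a_vw' (i : Fin n) (l : Fin (q + 1)) : (G E : SimpleGraph (Vert n m p q)).Adj (.v i) (.w' l) := by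
  simp [adj_iff, baseRel]

lemma a_vu {i : Fin n} {k : Fin (p + 1)} (h : Nat.testBit (i.1 + 1) k.1 = true) :
    (G E : SimpleGraph (Vert n m p q)).Adj (.v i) (.u k) := by
  simp [adj_iff, baseRel, h]

lemma a_vu' {i : Fin n} {k : Fin (p + 1)} (h : Nat.testBit (i.1 + 1) k.1 = true) :
    (G E : SimpleGraph (Vert n m p q)).Adj (.v i) (.u' k) := by
  simp [adj_iff, baseRel, h]

lemma a_eu (j : Fin m) (k : Fin (p + 1)) : (G E : SimpleGraph (Vert n m p q)).Adj (.e j) (.u k) := by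
  simp [adj_iff, baseRel]

lemma a_eu' (j : Fin m) (k : Fin (p + 1)) : (G E : SimpleGraph (Vert n m p q)).Adj (.e j) (.u' k) := by
  simp [adj_iff, baseRel]

lemma a_e'u (j : Fin m) (k : Fin (p + 1)) : (G E : SimpleGraph (Vert n m p q)).Adj (.e' j) (.u k) := by
  simp [adj_iff, baseRel]

lemma a_e'u' (j : Fin m) (k : Fin (p + 1)) : (G E : SimpleGraph (Vert n m p q)).Adj (.e' j) (.u' k) := by
  simp [adj_iff, baseRel]

lemma a_e'e' {j j' : Fin m} (h : j ≠ j') : (G E : SimpleGraph (Vert n m p q)).Adj (.e' j) (.e' j') := by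
  simp [adj_iff, baseRel, h]

lemma a_uu {k k' : Fin (p + 1)} (h : k ≠ k') : (G E : SimpleGraph (Vert n m p q)).Adj (.u k) (.u k') := by
  simp [adj_iff, baseRel, h]

lemma a_u'u' {k k' : Fin (p + 1)} (h : k ≠ k') : (G E : SimpleGraph (Vert n m p q)).Adj (.u' k) (.u' k') := by
  simp [adj_iff, baseRel, h]

lemma a_uu' {k k' : Fin (p + 1)} (h : k ≠ k') : (G E : SimpleGraph (Vert n m p q)).Adj (.u k) (.u' k') := by
  simp [adj_iff, baseRel, h]

lemma a_ww' (l : Fin (q + 1)) : (G E : SimpleGraph (Vert n m p q)).Adj (.w l) (.w' l) := by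
  simp [adj_iff, baseRel]

lemma na_uu' (k : Fin (p + 1)) : ¬ (G E : SimpleGraph (Vert n m p q)).Adj (.u k) (.u' k) := by
  simp [adj_iff, baseRel]

lemma na_uw (k : Fin (p + 1)) (l : Fin (q + 1)) : ¬ (G E : SimpleGraph (Vert n m p q)).Adj (.u k) (.w l) := by
  simp [adj_iff, baseRel]

lemma na_uw' (k : Fin (p + 1)) (l : Fin (q + 1)) : ¬ (G E : SimpleGraph (Vert n m p q)).Adj (.u k) (.w' l) := by
  simp [adj_iff, baseRel]

lemma na_u'w (k : Fin (p + 1)) (l : Fin (q + 1)) : ¬ (G E : SimpleGraph (Vert n m p q)).Adj (.u' k) (.w l) := by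
  simp [adj_iff, baseRel]

lemma na_u'w' (k : Fin (p + 1)) (l : Fin (q + 1)) : ¬ (G E : SimpleGraph (Vert n m p q)).Adj (.u' k) (.w' l) := by
  simp [adj_iff, baseRel]

lemma na_ww {k l : Fin (q + 1)} : ¬ (G E : SimpleGraph (Vert n m p q)).Adj (.w k) (.w l) := by
  simp [adj_iff, baseRel]

lemma na_w'w' {k l : Fin (q + 1)} : ¬ (G E : SimpleGraph (Vert n m p q)).Adj (.w' k) (.w' l) := by
  simp [adj_iff, baseRel]

lemma na_w'w {k l : Fin (q + 1)} (h : l ≠ k) : ¬ (G E : SimpleGraph (Vert n m p q)).Adj (.w' k) (.w l) := by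
  simp [adj_iff, baseRel, h, Ne.symm h]

/-! #### Twin lemmas -/

lemma twin_u (k : Fin (p + 1)) :
    ∀ x : Vert n m p q, x ≠ .u k → x ≠ .u' k →
      ((G E : SimpleGraph (Vert n m p q)).Adj (.u k) x ↔ (G E : SimpleGraph (Vert n m p q)).Adj (.u' k) x) := by
  intro x h1 h2
  cases x <;> simp_all [adj_iff, baseRel] <;> tauto

lemma twin_w (l : Fin (q + 1)) :
    ∀ x : Vert n m p q, x ≠ .w l → x ≠ .w' l →
      ((G E : SimpleGraph (Vert n m p q)).Adj (.w l) x ↔ (G E : SimpleGraph (Vert n m p q)).Adj (.w' l) x) := by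
  intro x h1 h2
  cases x <;> simp_all [adj_iff, baseRel] <;> tauto

/-! #### Distance helpers -/

lemma dist_eq_two' {a b c : Vert n m p q} (hab : a ≠ b) (hnadj : ¬ (G E : SimpleGraph (Vert n m p q)).Adj a b)
    (h1 : (G E : SimpleGraph (Vert n m p q)).Adj a c) (h2 : (G E : SimpleGraph (Vert n m p q)).Adj c b) : (G E : SimpleGraph (Vert n m p q)).dist a b = 2 := by
  have hle : (G E : SimpleGraph (Vert n m p q)).dist a b ≤ 2 := by
    have := SimpleGraph.dist_le
      (SimpleGraph.Walk.cons h1 (SimpleGraph.Walk.cons h2 SimpleGraph.Walk.nil))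
    simpa using this
  have h0 : (G E : SimpleGraph (Vert n m p q)).dist a b ≠ 0 := by
    rw [SimpleGraph.dist_ne_zero_iff_ne_and_reachable]
    exact ⟨hab, ⟨SimpleGraph.Walk.cons h1 (SimpleGraph.Walk.cons h2 SimpleGraph.Walk.nil)⟩⟩
  have h1' : (G E : SimpleGraph (Vert n m p q)).dist a b ≠ 1 := fun h => hnadj (SimpleGraph.dist_eq_one_iff_adj.mp h)
  omega

lemma dist_le_twin {a b : Vert n m p q}
    (htwin : ∀ x : Vert n m p q, x ≠ a → x ≠ b → ((G E : SimpleGraph (Vert n m p q)).Adj a x ↔ (G E : SimpleGraph (Vert n m p q)).Adj b x))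
    (hc : (G E : SimpleGraph (Vert n m p q)).Connected) {x : Vert n m p q} (hxb : x ≠ b) :
    (G E : SimpleGraph (Vert n m p q)).dist a x ≤ (G E : SimpleGraph (Vert n m p q)).dist b x := by
  obtain ⟨W, hW⟩ := hc.exists_walk_length_eq_dist b x
  cases W with
  | nil => exact absurd rfl hxb
  | @cons _ y _ h W' =>
    simp only [SimpleGraph.Walk.length_cons] at hW
    by_cases hy : y = a
    · subst hy
      have := SimpleGraph.dist_le W'
      omega
    · have hyb : y ≠ b := fun hh => (G E : SimpleGraph (Vert n m p q)).irrefl (hh ▸ h)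
      have hA : (G E : SimpleGraph (Vert n m p q)).Adj a y := (htwin y hy hyb).mpr h
      have := SimpleGraph.dist_le (SimpleGraph.Walk.cons hA W')
      simp only [SimpleGraph.Walk.length_cons] at this
      omega

lemma dist_twin {a b : Vert n m p q}
    (htwin : ∀ x : Vert n m p q, x ≠ a → x ≠ b → ((G E : SimpleGraph (Vert n m p q)).Adj a x ↔ (G E : SimpleGraph (Vert n m p q)).Adj b x))
    (hc : (G E : SimpleGraph (Vert n m p q)).Connected) {x : Vert n m p q} (hxa : x ≠ a) (hxb : x ≠ b) :
    (G E : SimpleGraph (Vert n m p q)).dist a x = (G E : SimpleGraph (Vert n m p q)).dist b x :=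
  le_antisymm (dist_le_twin htwin hc hxb)
    (dist_le_twin (fun x h1 h2 => (htwin x h2 h1).symm) hc hxa)

/-! #### Connectivity -/

lemma conn (hn0 : 0 < n) (hm0 : 0 < m) : (G E : SimpleGraph (Vert n m p q)).Connected := by
  rw [SimpleGraph.connected_iff_exists_forall_reachable]
  refine ⟨.e' ⟨0, hm0⟩, fun x => ?_⟩
  cases x with
  | v i => exact (a_ve' i _).symm.reachable
  | e j =>
    exact ((a_eu j 0).reachable.trans (a_e'u ⟨0, hm0⟩ 0).symm.reachable).symm
  | e' j =>
    exact ((a_e'u j 0).reachable.trans (a_e'u ⟨0, hm0⟩ 0).symm.reachable).symm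
  | u k => exact (a_e'u ⟨0, hm0⟩ k).reachable
  | u' k => exact (a_e'u' ⟨0, hm0⟩ k).reachable
  | w l =>
    exact ((a_vw ⟨0, hn0⟩ l).symm.reachable.trans (a_ve' ⟨0, hn0⟩ ⟨0, hm0⟩).reachable).symm
  | w' l =>
    exact ((a_vw' ⟨0, hn0⟩ l).symm.reachable.trans (a_ve' ⟨0, hn0⟩ ⟨0, hm0⟩).reachable).symm

/-! #### Concrete distances -/

lemma d_u'_u (hm0 : 0 < m) (k : Fin (p + 1)) :
    (G E : SimpleGraph (Vert n m p q)).dist (.u' k) (.u k) = 2 := by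
  refine dist_eq_two' (by simp) ?_ (a_eu' ⟨0, hm0⟩ k).symm (a_eu ⟨0, hm0⟩ k)
  intro h
  exact na_uu' k h.symm

lemma d_e_u (j : Fin m) (k : Fin (p + 1)) :
    (G E : SimpleGraph (Vert n m p q)).dist (.e j) (.u k) = 1 :=
  SimpleGraph.dist_eq_one_iff_adj.mpr (a_eu j k)

lemma d_e'_u (j : Fin m) (k : Fin (p + 1)) :
    (G E : SimpleGraph (Vert n m p q)).dist (.e' j) (.u k) = 1 :=
  SimpleGraph.dist_eq_one_iff_adj.mpr (a_e'u j k)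

lemma d_e_u' (j : Fin m) (k : Fin (p + 1)) :
    (G E : SimpleGraph (Vert n m p q)).dist (.e j) (.u' k) = 1 :=
  SimpleGraph.dist_eq_one_iff_adj.mpr (a_eu' j k)

lemma d_e'_u' (j : Fin m) (k : Fin (p + 1)) :
    (G E : SimpleGraph (Vert n m p q)).dist (.e' j) (.u' k) = 1 :=
  SimpleGraph.dist_eq_one_iff_adj.mpr (a_e'u' j k)

lemma d_u_u {j k : Fin (p + 1)} (h : j ≠ k) :
    (G E : SimpleGraph (Vert n m p q)).dist (.u j) (.u k) = 1 :=
  SimpleGraph.dist_eq_one_iff_adj.mpr (a_uu h)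

lemma d_u'_u_ne {j k : Fin (p + 1)} (h : j ≠ k) :
    (G E : SimpleGraph (Vert n m p q)).dist (.u' j) (.u k) = 1 :=
  SimpleGraph.dist_eq_one_iff_adj.mpr (a_uu' (Ne.symm h)).symm

lemma d_u_u' {j k : Fin (p + 1)} (h : j ≠ k) :
    (G E : SimpleGraph (Vert n m p q)).dist (.u j) (.u' k) = 1 :=
  SimpleGraph.dist_eq_one_iff_adj.mpr (a_uu' h)

lemma d_u'_u' {j k : Fin (p + 1)} (h : j ≠ k) :
    (G E : SimpleGraph (Vert n m p q)).dist (.u' j) (.u' k) = 1 :=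
  SimpleGraph.dist_eq_one_iff_adj.mpr (a_u'u' h)

lemma d_v_w (i : Fin n) (l : Fin (q + 1)) :
    (G E : SimpleGraph (Vert n m p q)).dist (.v i) (.w l) = 1 :=
  SimpleGraph.dist_eq_one_iff_adj.mpr (a_vw i l)

lemma d_v_w' (i : Fin n) (l : Fin (q + 1)) :
    (G E : SimpleGraph (Vert n m p q)).dist (.v i) (.w' l) = 1 :=
  SimpleGraph.dist_eq_one_iff_adj.mpr (a_vw' i l)

lemma d_v_u {i : Fin n} {k : Fin (p + 1)} (h : Nat.testBit (i.1 + 1) k.1 = true) :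
    (G E : SimpleGraph (Vert n m p q)).dist (.v i) (.u k) = 1 :=
  SimpleGraph.dist_eq_one_iff_adj.mpr (a_vu h)

lemma d_v_u' {i : Fin n} {k : Fin (p + 1)} (h : Nat.testBit (i.1 + 1) k.1 = true) :
    (G E : SimpleGraph (Vert n m p q)).dist (.v i) (.u' k) = 1 :=
  SimpleGraph.dist_eq_one_iff_adj.mpr (a_vu' h)

lemma d_w_w' (l : Fin (q + 1)) :
    (G E : SimpleGraph (Vert n m p q)).dist (.w l) (.w' l) = 1 :=
  SimpleGraph.dist_eq_one_iff_adj.mpr (a_ww' l)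

lemma d_w'_w (l : Fin (q + 1)) :
    (G E : SimpleGraph (Vert n m p q)).dist (.w' l) (.w l) = 1 :=
  SimpleGraph.dist_eq_one_iff_adj.mpr (a_ww' l).symm

/-- The canonical vertex of `V` adjacent to `u k` and `u' k`. -/
lemma exists_v_adj (hn : n = 2 ^ p) (k : Fin (p + 1)) :
    ∃ i : Fin n, Nat.testBit (i.1 + 1) k.1 = true := by
  have hk : (k : ℕ) ≤ p := by omega
  have h1 : 0 < 2 ^ (k : ℕ) := Nat.pow_pos (by norm_num)
  have h2 : 2 ^ (k : ℕ) ≤ 2 ^ p := Nat.pow_le_pow_right (by norm_num) hk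
  refine ⟨⟨2 ^ (k : ℕ) - 1, by omega⟩, ?_⟩
  have : 2 ^ (k : ℕ) - 1 + 1 = 2 ^ (k : ℕ) := by omega
  rw [this]
  exact Nat.testBit_two_pow_self

lemma d_u_w (hn : n = 2 ^ p) (k : Fin (p + 1)) (l : Fin (q + 1)) :
    (G E : SimpleGraph (Vert n m p q)).dist (.u k) (.w l) = 2 := by
  obtain ⟨i, hi⟩ := exists_v_adj (p := p) hn k
  exact dist_eq_two' (by simp) (na_uw k l) (a_vu hi).symm (a_vw i l)

lemma d_u_w' (hn : n = 2 ^ p) (k : Fin (p + 1)) (l : Fin (q + 1)) :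
    (G E : SimpleGraph (Vert n m p q)).dist (.u k) (.w' l) = 2 := by
  obtain ⟨i, hi⟩ := exists_v_adj (p := p) hn k
  exact dist_eq_two' (by simp) (na_uw' k l) (a_vu hi).symm (a_vw' i l)

lemma d_u'_w (hn : n = 2 ^ p) (k : Fin (p + 1)) (l : Fin (q + 1)) :
    (G E : SimpleGraph (Vert n m p q)).dist (.u' k) (.w l) = 2 := by
  obtain ⟨i, hi⟩ := exists_v_adj (p := p) hn k
  exact dist_eq_two' (by simp) (na_u'w k l) (a_vu' hi).symm (a_vw i l)

lemma d_u'_w' (hn : n = 2 ^ p) (k : Fin (p + 1)) (l : Fin (q + 1)) :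
    (G E : SimpleGraph (Vert n m p q)).dist (.u' k) (.w' l) = 2 := by
  obtain ⟨i, hi⟩ := exists_v_adj (p := p) hn k
  exact dist_eq_two' (by simp) (na_u'w' k l) (a_vu' hi).symm (a_vw' i l)

lemma d_w'_u (hn : n = 2 ^ p) (k : Fin (q + 1)) (j : Fin (p + 1)) :
    (G E : SimpleGraph (Vert n m p q)).dist (.w' k) (.u j) = 2 := by
  rw [SimpleGraph.dist_comm]; exact d_u_w' hn j k

lemma d_w'_u' (hn : n = 2 ^ p) (k : Fin (q + 1)) (j : Fin (p + 1)) :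
    (G E : SimpleGraph (Vert n m p q)).dist (.w' k) (.u' j) = 2 := by
  rw [SimpleGraph.dist_comm]; exact d_u'_w' hn j k

lemma d_w'_w_ne (hn0 : 0 < n) {k l : Fin (q + 1)} (h : l ≠ k) :
    (G E : SimpleGraph (Vert n m p q)).dist (.w' k) (.w l) = 2 :=
  dist_eq_two' (by simp) (na_w'w h) (a_vw' ⟨0, hn0⟩ k).symm (a_vw ⟨0, hn0⟩ l)

lemma d_w'_w'_ne (hn0 : 0 < n) {k l : Fin (q + 1)} (h : l ≠ k) :
    (G E : SimpleGraph (Vert n m p q)).dist (.w' k) (.w' l) = 2 :=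
  dist_eq_two' (by simp [Ne.symm h]) na_w'w' (a_vw' ⟨0, hn0⟩ k).symm (a_vw' ⟨0, hn0⟩ l)

lemma exists_bit (hn : n = 2 ^ p) (i : Fin n) :
    ∃ k : Fin (p + 1), Nat.testBit (i.1 + 1) k.1 = true := by
  obtain ⟨k, hk, -⟩ := Nat.exists_most_significant_bit (n := i.1 + 1) (by omega)
  refine ⟨⟨k, ?_⟩, hk⟩
  by_contra hle
  push_neg at hle
  have h1 : (i : ℕ) + 1 ≤ 2 ^ p := by have := i.2; omega
  have h2 : (2 : ℕ) ^ p < 2 ^ (p + 1) := Nat.pow_lt_pow_right (by norm_num) (by omega)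
  have h3 : (2 : ℕ) ^ (p + 1) ≤ 2 ^ k := Nat.pow_le_pow_right (by norm_num) (by omega)
  have := Nat.testBit_eq_false_of_lt (n := (i : ℕ) + 1) (i := k) (by omega)
  simp [this] at hk

/-! #### Resolving-set lemmas -/

lemma atLeast_u (hc : (G E : SimpleGraph (Vert n m p q)).Connected) (hS : IsResolvingSet (G E : SimpleGraph (Vert n m p q)) S) (k : Fin (p + 1)) :
    (Vert.u k : Vert n m p q) ∈ S ∨ (Vert.u' k : Vert n m p q) ∈ S := by
  obtain ⟨z, hzS, hz⟩ := hS (.u k) (.u' k) (by simp)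
  by_cases h1 : z = .u k
  · exact Or.inl (h1 ▸ hzS)
  by_cases h2 : z = .u' k
  · exact Or.inr (h2 ▸ hzS)
  exact absurd (dist_twin (twin_u k) hc h1 h2) hz

lemma atLeast_w (hc : (G E : SimpleGraph (Vert n m p q)).Connected) (hS : IsResolvingSet (G E : SimpleGraph (Vert n m p q)) S) (l : Fin (q + 1)) :
    (Vert.w l : Vert n m p q) ∈ S ∨ (Vert.w' l : Vert n m p q) ∈ S := by
  obtain ⟨z, hzS, hz⟩ := hS (.w l) (.w' l) (by simp)
  by_cases h1 : z = .w l
  · exact Or.inl (h1 ▸ hzS)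
  by_cases h2 : z = .w' l
  · exact Or.inr (h2 ▸ hzS)
  exact absurd (dist_twin (twin_w l) hc h1 h2) hz

lemma key_u (hn : n = 2 ^ p) (hn0 : 0 < n) (hm0 : 0 < m)
    (hc : (G E : SimpleGraph (Vert n m p q)).Connected) (hS : IsResolvingSet (G E : SimpleGraph (Vert n m p q)) S) {k : Fin (p + 1)}
    (hu : (Vert.u k : Vert n m p q) ∈ S) :
    ∀ b : Vert n m p q, b ≠ .u' k →
      ∃ z ∈ S \ {Vert.u' k}, (G E : SimpleGraph (Vert n m p q)).dist (.u' k) z ≠ (G E : SimpleGraph (Vert n m p q)).dist b z := by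
  intro b hb
  have hzu : (Vert.u k : Vert n m p q) ∈ S \ {Vert.u' k} := ⟨hu, by simp⟩
  cases b with
  | v i =>
    rcases atLeast_w hc hS 0 with h | h
    · exact ⟨.w 0, ⟨h, by simp⟩, by rw [d_u'_w hn, d_v_w]; omega⟩
    · exact ⟨.w' 0, ⟨h, by simp⟩, by rw [d_u'_w' hn, d_v_w']; omega⟩
  | e j => exact ⟨.u k, hzu, by rw [d_u'_u hm0, d_e_u]; omega⟩
  | e' j => exact ⟨.u k, hzu, by rw [d_u'_u hm0, d_e'_u]; omega⟩
  | u j =>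
    by_cases hj : j = k
    · subst hj
      exact ⟨.u j, hzu, by rw [d_u'_u hm0, SimpleGraph.dist_self]; omega⟩
    · exact ⟨.u k, hzu, by rw [d_u'_u hm0, d_u_u hj]; omega⟩
  | u' j =>
    have hj : j ≠ k := fun hh => hb (by rw [hh])
    exact ⟨.u k, hzu, by rw [d_u'_u hm0, d_u'_u_ne hj]; omega⟩
  | w l =>
    rcases atLeast_w hc hS l with h | h
    · exact ⟨.w l, ⟨h, by simp⟩, by rw [d_u'_w hn, SimpleGraph.dist_self]; omega⟩
    · exact ⟨.w' l, ⟨h, by simp⟩, by rw [d_u'_w' hn, d_w_w']; omega⟩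
  | w' l =>
    rcases atLeast_w hc hS l with h | h
    · exact ⟨.w l, ⟨h, by simp⟩, by rw [d_u'_w hn, d_w'_w]; omega⟩
    · exact ⟨.w' l, ⟨h, by simp⟩, by rw [d_u'_w' hn, SimpleGraph.dist_self]; omega⟩

lemma key_w (hn : n = 2 ^ p) (hn0 : 0 < n) (hm0 : 0 < m) (hp1 : 1 ≤ p)
    (hc : (G E : SimpleGraph (Vert n m p q)).Connected) (hS : IsResolvingSet (G E : SimpleGraph (Vert n m p q)) S) {k : Fin (q + 1)}
    (hw : (Vert.w k : Vert n m p q) ∈ S) :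
    ∀ b : Vert n m p q, b ≠ .w' k →
      ∃ z ∈ S \ {Vert.w' k}, (G E : SimpleGraph (Vert n m p q)).dist (.w' k) z ≠ (G E : SimpleGraph (Vert n m p q)).dist b z := by
  intro b hb
  cases b with
  | v i =>
    obtain ⟨K, hK⟩ := exists_bit (p := p) hn i
    rcases atLeast_u hc hS K with h | h
    · exact ⟨.u K, ⟨h, by simp⟩, by rw [d_w'_u hn, d_v_u hK]; omega⟩
    · exact ⟨.u' K, ⟨h, by simp⟩, by rw [d_w'_u' hn, d_v_u' hK]; omega⟩
  | e j =>
    rcases atLeast_u hc hS 0 with h | h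
    · exact ⟨.u 0, ⟨h, by simp⟩, by rw [d_w'_u hn, d_e_u]; omega⟩
    · exact ⟨.u' 0, ⟨h, by simp⟩, by rw [d_w'_u' hn, d_e_u']; omega⟩
  | e' j =>
    rcases atLeast_u hc hS 0 with h | h
    · exact ⟨.u 0, ⟨h, by simp⟩, by rw [d_w'_u hn, d_e'_u]; omega⟩
    · exact ⟨.u' 0, ⟨h, by simp⟩, by rw [d_w'_u' hn, d_e'_u']; omega⟩
  | u j =>
    obtain ⟨j', hj'⟩ : ∃ j' : Fin (p + 1), j ≠ j' := by
      have : Nontrivial (Fin (p + 1)) := Fin.nontrivial_iff_two_le.mpr (by omega)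
      rcases exists_ne j with ⟨j', hj'⟩
      exact ⟨j', Ne.symm hj'⟩
    rcases atLeast_u hc hS j' with h | h
    · exact ⟨.u j', ⟨h, by simp⟩, by rw [d_w'_u hn, d_u_u hj']; omega⟩
    · exact ⟨.u' j', ⟨h, by simp⟩, by rw [d_w'_u' hn, d_u_u' hj']; omega⟩
  | u' j =>
    obtain ⟨j', hj'⟩ : ∃ j' : Fin (p + 1), j ≠ j' := by
      have : Nontrivial (Fin (p + 1)) := Fin.nontrivial_iff_two_le.mpr (by omega)
      rcases exists_ne j with ⟨j', hj'⟩
      exact ⟨j', Ne.symm hj'⟩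
    rcases atLeast_u hc hS j' with h | h
    · exact ⟨.u j', ⟨h, by simp⟩, by rw [d_w'_u hn, d_u'_u_ne hj']; omega⟩
    · exact ⟨.u' j', ⟨h, by simp⟩, by rw [d_w'_u' hn, d_u'_u' hj']; omega⟩
  | w l =>
    by_cases hl : l = k
    · subst hl
      exact ⟨.w l, ⟨hw, by simp⟩, by rw [d_w'_w, SimpleGraph.dist_self]; omega⟩
    · rcases atLeast_w hc hS l with h | h
      · exact ⟨.w l, ⟨h, by simp⟩, by rw [d_w'_w_ne hn0 hl, SimpleGraph.dist_self]; omega⟩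
      · exact ⟨.w' l, ⟨h, by simp [hl]⟩, by rw [d_w'_w'_ne hn0 hl, d_w_w']; omega⟩
  | w' l =>
    have hl : l ≠ k := fun hh => hb (by rw [hh])
    rcases atLeast_w hc hS l with h | h
    · exact ⟨.w l, ⟨h, by simp⟩, by rw [d_w'_w_ne hn0 hl, d_w'_w]; omega⟩
    · exact ⟨.w' l, ⟨h, by simp [hl]⟩, by rw [d_w'_w'_ne hn0 hl, SimpleGraph.dist_self]; omega⟩

lemma del_u (hn : n = 2 ^ p) (hn0 : 0 < n) (hm0 : 0 < m)
    (hc : (G E : SimpleGraph (Vert n m p q)).Connected) (hS : IsResolvingSet (G E : SimpleGraph (Vert n m p q)) S) {k : Fin (p + 1)}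
    (hu : (Vert.u k : Vert n m p q) ∈ S) :
    IsResolvingSet (G E : SimpleGraph (Vert n m p q)) (S \ {Vert.u' k}) := by
  intro a b hab
  by_cases ha : a = .u' k
  · subst ha
    exact key_u hn hn0 hm0 hc hS hu b (Ne.symm hab)
  by_cases hb : b = .u' k
  · subst hb
    obtain ⟨z, hz, hd⟩ := key_u hn hn0 hm0 hc hS hu a ha
    exact ⟨z, hz, Ne.symm hd⟩
  obtain ⟨z, hzS, hzd⟩ := hS a b hab
  by_cases hz' : z = .u' k
  · subst hz'
    by_cases hau : a = .u k
    · subst hau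
      refine ⟨.u k, ⟨hu, by simp⟩, ?_⟩
      rw [SimpleGraph.dist_self]
      have : (G E : SimpleGraph (Vert n m p q)).dist b (.u k) ≠ 0 := by
        rw [SimpleGraph.dist_ne_zero_iff_ne_and_reachable]
        exact ⟨Ne.symm hab, hc _ _⟩
      omega
    by_cases hbu : b = .u k
    · subst hbu
      refine ⟨.u k, ⟨hu, by simp⟩, ?_⟩
      rw [SimpleGraph.dist_self]
      have : (G E : SimpleGraph (Vert n m p q)).dist a (.u k) ≠ 0 := by
        rw [SimpleGraph.dist_ne_zero_iff_ne_and_reachable]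
        exact ⟨hab, hc _ _⟩
      omega
    · refine ⟨.u k, ⟨hu, by simp⟩, ?_⟩
      have e1 : (G E : SimpleGraph (Vert n m p q)).dist a (.u k) = (G E : SimpleGraph (Vert n m p q)).dist a (.u' k) := by
        rw [SimpleGraph.dist_comm, dist_twin (twin_u k) hc hau ha, SimpleGraph.dist_comm]
      have e2 : (G E : SimpleGraph (Vert n m p q)).dist b (.u k) = (G E : SimpleGraph (Vert n m p q)).dist b (.u' k) := by
        rw [SimpleGraph.dist_comm, dist_twin (twin_u k) hc hbu hb, SimpleGraph.dist_comm]
      rw [e1, e2]; exact hzd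
  · exact ⟨z, ⟨hzS, hz'⟩, hzd⟩

lemma del_w (hn : n = 2 ^ p) (hn0 : 0 < n) (hm0 : 0 < m) (hp1 : 1 ≤ p)
    (hc : (G E : SimpleGraph (Vert n m p q)).Connected) (hS : IsResolvingSet (G E : SimpleGraph (Vert n m p q)) S) {k : Fin (q + 1)}
    (hw : (Vert.w k : Vert n m p q) ∈ S) :
    IsResolvingSet (G E : SimpleGraph (Vert n m p q)) (S \ {Vert.w' k}) := by
  intro a b hab
  by_cases ha : a = .w' k
  · subst ha
    exact key_w hn hn0 hm0 hp1 hc hS hw b (Ne.symm hab)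
  by_cases hb : b = .w' k
  · subst hb
    obtain ⟨z, hz, hd⟩ := key_w hn hn0 hm0 hp1 hc hS hw a ha
    exact ⟨z, hz, Ne.symm hd⟩
  obtain ⟨z, hzS, hzd⟩ := hS a b hab
  by_cases hz' : z = .w' k
  · subst hz'
    by_cases hau : a = .w k
    · subst hau
      refine ⟨.w k, ⟨hw, by simp⟩, ?_⟩
      rw [SimpleGraph.dist_self]
      have : (G E : SimpleGraph (Vert n m p q)).dist b (.w k) ≠ 0 := by
        rw [SimpleGraph.dist_ne_zero_iff_ne_and_reachable]
        exact ⟨Ne.symm hab, hc _ _⟩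
      omega
    by_cases hbu : b = .w k
    · subst hbu
      refine ⟨.w k, ⟨hw, by simp⟩, ?_⟩
      rw [SimpleGraph.dist_self]
      have : (G E : SimpleGraph (Vert n m p q)).dist a (.w k) ≠ 0 := by
        rw [SimpleGraph.dist_ne_zero_iff_ne_and_reachable]
        exact ⟨hab, hc _ _⟩
      omega
    · refine ⟨.w k, ⟨hw, by simp⟩, ?_⟩
      have e1 : (G E : SimpleGraph (Vert n m p q)).dist a (.w k) = (G E : SimpleGraph (Vert n m p q)).dist a (.w' k) := by
        rw [SimpleGraph.dist_comm, dist_twin (twin_w k) hc hau ha, SimpleGraph.dist_comm]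
      have e2 : (G E : SimpleGraph (Vert n m p q)).dist b (.w k) = (G E : SimpleGraph (Vert n m p q)).dist b (.w' k) := by
        rw [SimpleGraph.dist_comm, dist_twin (twin_w k) hc hbu hb, SimpleGraph.dist_comm]
      rw [e1, e2]; exact hzd
  · exact ⟨z, ⟨hzS, hz'⟩, hzd⟩

end Aux


/-- In the graph `G` of the resolving-set construction, every minimal resolving set
intersects each of the pairs `{u_k, u'_k}` and `{w_k, w'_k}` in exactly one vertex. -/
theorem minimal_resolving_meets_twin_pairs
    (E : Fin m → Set (Fin n))
    (hn : n = 2 ^ p) (hm : m = 2 ^ q) (hn2 : 2 < n) (hm2 : 2 < m)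
    (hSperner : ∀ j j' : Fin m, E j ⊆ E j' → j = j')
    (hfull : ∀ j : Fin m, E j ≠ Set.univ)
    (S : Set (Vert n m p q)) (hS : IsMinimalResolvingSet (G E) S) :
    (∀ k : Fin (p + 1),
      (Vert.u k ∈ S ∧ Vert.u' k ∉ S) ∨ (Vert.u k ∉ S ∧ Vert.u' k ∈ S)) ∧
    (∀ k : Fin (q + 1),
      (Vert.w k ∈ S ∧ Vert.w' k ∉ S) ∨ (Vert.w k ∉ S ∧ Vert.w' k ∈ S)) := by
  have hn0 : 0 < n := by omega
  have hm0 : 0 < m := by omega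
  have hp1 : 1 ≤ p := by
    rcases Nat.eq_zero_or_pos p with h | h
    · subst h; simp at hn; omega
    · exact h
  have hc : (G E : SimpleGraph (Vert n m p q)).Connected := conn hn0 hm0
  have hres := hS.1
  constructor
  · intro k
    rcases atLeast_u hc hres k with h | h
    · left
      refine ⟨h, fun h' => ?_⟩
      exact hS.2 (S \ {Vert.u' k}) (Set.sdiff_singleton_ssubset.mpr h')
        (del_u hn hn0 hm0 hc hres h)
    · by_cases h' : (Vert.u k : Vert n m p q) ∈ S
      · exact absurd (del_u hn hn0 hm0 hc hres h')
          (hS.2 (S \ {Vert.u' k}) (Set.sdiff_singleton_ssubset.mpr h))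
      · exact Or.inr ⟨h', h⟩
  · intro k
    rcases atLeast_w hc hres k with h | h
    · left
      refine ⟨h, fun h' => ?_⟩
      exact hS.2 (S \ {Vert.w' k}) (Set.sdiff_singleton_ssubset.mpr h')
        (del_w hn hn0 hm0 hp1 hc hres h)
    · by_cases h' : (Vert.w k : Vert n m p q) ∈ S
      · exact absurd (del_w hn hn0 hm0 hp1 hc hres h')
          (hS.2 (S \ {Vert.w' k}) (Set.sdiff_singleton_ssubset.mpr h))
      · exact Or.inr ⟨h', h⟩


end ResConstr
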